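/- (Strong duality for the CoCo problem) Let A ∈ ℝ^{m × n} be the vertical stack of the matrices A_{d,l} over all modes d and edges l ∈ E_d, and let C = { λ = (λ_{d,l}) : ‖λ_{d,l}‖₂ ≤ γ w_{d,l} for all d, l } ⊆ ℝ^m. Then min_{u ∈ ℝ^n} F_γ(u) = max_{λ ∈ C} { (1/2)‖x‖₂² − (1/2)‖x − Aᵀλ‖₂² }, and the maximum on the right is attained. -/

import Mathlib

/-! Under `Aᵀ` the dual feasible set `C` becomes a compact convex set `K`, and the penalty
`γ Σ_{d,l} w_{d,l} ‖A_{d,l} u‖₂` is the support function of `K`: Cauchy–Schwarz bounds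
`⟨u, Aᵀλ⟩` by it, with equality for the blocks `λ_{d,l}` aligned with `A_{d,l} u`. Weak duality
is then a completed square. To close the gap, let `v` be the projection of `x` onto `K` and
`û = x − v`: the variational inequality of the projection says that the support function at `û`
is attained at `v`, and this gives `F_γ(û) = ½‖x‖² − ½‖x − v‖²`. -/

open scoped BigOperators
open Finset MeasureTheory Matrix

noncomputable section

/-- The full (vectorized) index set of a `D`-way tensor with mode sizes `n d`. -/
abbrev TIdx {D : ℕ} (n : Fin D → ℕ) : Type := ∀ d, Fin (n d)

/-- The index set of a mode-`d` subarray: all modes except `d`. -/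
abbrev RIdx {D : ℕ} (n : Fin D → ℕ) (d : Fin D) : Type :=
  ∀ d' : {x : Fin D // x ≠ d}, Fin (n d'.1)

/-- Insert the mode-`d` index `i` into the partial index `g`. -/
def insIdx {D : ℕ} (n : Fin D → ℕ) (d : Fin D) (g : RIdx n d) (i : Fin (n d)) : TIdx n :=
  fun d' => if h : d' = d then h.symm ▸ i else g ⟨d', h⟩

/-- The matrix `A_{d,ij} = I ⊗ ⋯ ⊗ (e_i - e_j)ᵀ ⊗ ⋯ ⊗ I`, realized on the canonical
multi-index sets: applied to `u`, the `g`-th entry is `u(.., i, ..) - u(.., j, ..)`. -/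
def Amat {D : ℕ} (n : Fin D → ℕ) (d : Fin D) (i j : Fin (n d)) :
    Matrix (RIdx n d) (TIdx n) ℝ :=
  Matrix.of fun g f =>
    (if f = insIdx n d g i then (1 : ℝ) else 0) - (if f = insIdx n d g j then (1 : ℝ) else 0)

/-- Euclidean (ℓ₂) norm of a finitely-indexed real vector. -/
def l2 {κ : Type*} [Fintype κ] (v : κ → ℝ) : ℝ := Real.sqrt (∑ a, v a ^ 2)

/-- The mode-`d` fusion penalty `R_d(u) = Σ_{i<j} w_{d,ij} ‖A_{d,ij} u‖₂`. -/
def Rmode {D : ℕ} (n : Fin D → ℕ) (d : Fin D) (w : Fin (n d) → Fin (n d) → ℝ)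
    (u : TIdx n → ℝ) : ℝ :=
  ∑ i, ∑ j, if i < j then w i j * l2 ((Amat n d i j).mulVec u) else 0

/-- The CoCo objective `F_γ(u) = (1/2)‖x - u‖₂² + γ Σ_d Σ_{i<j} w_{d,ij} ‖A_{d,ij} u‖₂`. -/
def coco {D : ℕ} (n : Fin D → ℕ) (x : TIdx n → ℝ) (γ : ℝ)
    (w : ∀ d, Fin (n d) → Fin (n d) → ℝ) (u : TIdx n → ℝ) : ℝ :=
  (1 / 2) * ∑ f, (x f - u f) ^ 2 + γ * ∑ d, Rmode n d (w d) u

/-- The CoCo objective with penalties summed over given edge sets `E_d`: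
`F_γ(u) = (1/2)‖x − u‖₂² + γ Σ_d Σ_{l ∈ E_d} w_{d,l} ‖A_{d,l} u‖₂`. -/
def cocoE {D : ℕ} (n : Fin D → ℕ) (E : ∀ d, Finset (Fin (n d) × Fin (n d)))
    (w : ∀ d, Fin (n d) × Fin (n d) → ℝ) (x : TIdx n → ℝ) (γ : ℝ) (u : TIdx n → ℝ) : ℝ :=
  (1 / 2) * ∑ f, (x f - u f) ^ 2 +
    γ * ∑ d, ∑ l ∈ E d, w d l * l2 ((Amat n d l.1 l.2).mulVec u)

/-- A dual variable: one block `λ_{d,l} ∈ ℝ^{n_{-d}}` for each mode `d` and pair `l`. -/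
abbrev DualVar {D : ℕ} (n : Fin D → ℕ) : Type :=
  ∀ d : Fin D, (Fin (n d) × Fin (n d)) → RIdx n d → ℝ

/-- `Aᵀλ = Σ_d Σ_{l ∈ E_d} A_{d,l}ᵀ λ_{d,l}`, the transpose of the stacked matrix applied to a
dual variable. -/
def ATlam {D : ℕ} (n : Fin D → ℕ) (E : ∀ d, Finset (Fin (n d) × Fin (n d)))
    (lam : DualVar n) : TIdx n → ℝ :=
  fun f => ∑ d, ∑ l ∈ E d, ∑ g, lam d l g * Amat n d l.1 l.2 g f

/-- Membership in the dual feasible set `C`: `‖λ_{d,l}‖₂ ≤ γ w_{d,l}` for every mode `d` and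
edge `l ∈ E_d`. -/
def InDualBall {D : ℕ} (n : Fin D → ℕ) (E : ∀ d, Finset (Fin (n d) × Fin (n d)))
    (w : ∀ d, Fin (n d) × Fin (n d) → ℝ) (γ : ℝ) (lam : DualVar n) : Prop :=
  ∀ d, ∀ l ∈ E d, l2 (lam d l) ≤ γ * w d l

/-- The Lagrangian dual objective `G(λ) = (1/2)‖x‖₂² − (1/2)‖x − Aᵀλ‖₂²`. -/
def dualObj {D : ℕ} (n : Fin D → ℕ) (E : ∀ d, Finset (Fin (n d) × Fin (n d)))
    (x : TIdx n → ℝ) (lam : DualVar n) : ℝ :=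
  (1 / 2) * ∑ f, x f ^ 2 - (1 / 2) * ∑ f, (x f - ATlam n E lam f) ^ 2

open scoped RealInnerProductSpace

section ProjectionDuality

variable {H : Type*} [NormedAddCommGroup H] [InnerProductSpace ℝ H]

theorem weak_duality_of_inner_le {x u v : H} {p : ℝ} (h : ⟪u, v⟫ ≤ p) :
    1 / 2 * ‖x‖ ^ 2 - 1 / 2 * ‖x - v‖ ^ 2 ≤ 1 / 2 * ‖x - u‖ ^ 2 + p := by
  have hsq := sq_nonneg ‖x - u - v‖
  rw [norm_sub_sq_real (x - u), inner_sub_left] at hsq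
  rw [norm_sub_sq_real x v]
  linarith

theorem exists_norm_le_inner_eq {r : ℝ} (hr : 0 ≤ r) (y : H) :
    ∃ μ : H, ‖μ‖ ≤ r ∧ ⟪μ, y⟫ = r * ‖y‖ := by
  rcases eq_or_ne y 0 with rfl | hy
  · exact ⟨0, by simpa using hr, by simp⟩
  · refine ⟨(r / ‖y‖) • y, ?_, ?_⟩
    · rw [norm_smul, Real.norm_of_nonneg (by positivity), div_mul_cancel₀ _ (norm_ne_zero_iff.2 hy)]
    · rw [real_inner_smul_left, real_inner_self_eq_norm_sq]
      field_simp

theorem exists_zero_duality_gap {K : Set H} (hK : IsComplete K)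
    (hKconv : Convex ℝ K) (hKne : K.Nonempty) {P : H → ℝ}
    (hle : ∀ u, ∀ v ∈ K, ⟪u, v⟫ ≤ P u) (hatt : ∀ u, ∃ v ∈ K, ⟪u, v⟫ = P u) (x : H) :
    ∃ v ∈ K, 1 / 2 * ‖x - (x - v)‖ ^ 2 + P (x - v) = 1 / 2 * ‖x‖ ^ 2 - 1 / 2 * ‖x - v‖ ^ 2 := by
  obtain ⟨v, hvK, hv⟩ := exists_norm_eq_iInf_of_complete_convex hKne hK hKconv x
  have hvi := (norm_eq_iInf_iff_real_inner_le_zero hKconv hvK).1 hv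
  obtain ⟨w, hwK, hw⟩ := hatt (x - v)
  have hPv : P (x - v) = ⟪x - v, v⟫ := by
    refine le_antisymm ?_ (hle _ v hvK)
    have := hvi w hwK
    rw [inner_sub_right] at this
    linarith
  refine ⟨v, hvK, ?_⟩
  rw [hPv, sub_sub_cancel, norm_sub_sq_real, inner_sub_left, real_inner_self_eq_norm_sq]
  ring

end ProjectionDuality

section L2

variable {κ : Type*} [Fintype κ]

theorem l2_eq_norm (v : κ → ℝ) : l2 v = ‖WithLp.toLp 2 v‖ := by
  simp [l2, EuclideanSpace.norm_eq]

theorem dotProduct_le_l2_mul_l2 (a b : κ → ℝ) : a ⬝ᵥ b ≤ l2 a * l2 b := by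
  simpa [l2_eq_norm, EuclideanSpace.inner_toLp_toLp, mul_comm]
    using real_inner_le_norm (WithLp.toLp 2 b) (WithLp.toLp 2 a)

theorem exists_l2_le_dotProduct_eq {r : ℝ} (hr : 0 ≤ r) (y : κ → ℝ) :
    ∃ μ : κ → ℝ, l2 μ ≤ r ∧ μ ⬝ᵥ y = r * l2 y := by
  obtain ⟨μ, hμr, hμy⟩ := exists_norm_le_inner_eq hr (WithLp.toLp 2 y)
  refine ⟨WithLp.ofLp μ, by simpa [l2_eq_norm] using hμr, ?_⟩
  rw [l2_eq_norm, ← hμy, EuclideanSpace.inner_eq_star_dotProduct, star_trivial, dotProduct_comm]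

theorem setOf_l2_le_eq_image (r : ℝ) :
    {v : κ → ℝ | l2 v ≤ r} = WithLp.linearEquiv 2 ℝ (κ → ℝ) '' Metric.closedBall 0 r := by
  rw [LinearEquiv.image_eq_preimage_symm]
  ext v
  simp [l2_eq_norm]

theorem isCompact_setOf_l2_le (r : ℝ) : IsCompact {v : κ → ℝ | l2 v ≤ r} := by
  rw [setOf_l2_le_eq_image]
  exact (isCompact_closedBall 0 r).image (LinearMap.continuous_of_finiteDimensional _)

theorem convex_setOf_l2_le (r : ℝ) : Convex ℝ {v : κ → ℝ | l2 v ≤ r} := by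
  rw [setOf_l2_le_eq_image]
  exact (convex_closedBall 0 r).linear_image _

end L2

section CoCo

variable {D : ℕ} (n : Fin D → ℕ) (E : ∀ d, Finset (Fin (n d) × Fin (n d)))
  (w : ∀ d, Fin (n d) × Fin (n d) → ℝ) (γ : ℝ)

def fusionPenalty (u : TIdx n → ℝ) : ℝ :=
  ∑ d, ∑ l ∈ E d, w d l * l2 (Amat n d l.1 l.2 *ᵥ u)

/-- A compact replacement for the dual feasible set `C`: blocks off the edges are forced to
vanish, which does not change the image under `Aᵀ`. -/
def edgeDualBall : Set (DualVar n) :=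
  Set.univ.pi fun d => Set.univ.pi fun l => {v | l2 v ≤ if l ∈ E d then γ * w d l else 0}

def ATlamLinearMap : DualVar n →ₗ[ℝ] EuclideanSpace ℝ (TIdx n) where
  toFun lam := WithLp.toLp 2 (ATlam n E lam)
  map_add' a b := by
    ext f
    simp [ATlam, add_mul, Finset.sum_add_distrib]
  map_smul' c a := by
    ext f
    simp [ATlam, Finset.mul_sum, mul_assoc]

theorem isCompact_edgeDualBall : IsCompact (edgeDualBall n E w γ) :=
  isCompact_univ_pi fun _ => isCompact_univ_pi fun _ => isCompact_setOf_l2_le _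

theorem convex_edgeDualBall : Convex ℝ (edgeDualBall n E w γ) :=
  convex_pi fun _ _ => convex_pi fun _ _ => convex_setOf_l2_le _

variable {n E w γ}

theorem ATlam_eq_sum_vecMul (lam : DualVar n) :
    ATlam n E lam = ∑ d, ∑ l ∈ E d, lam d l ᵥ* Amat n d l.1 l.2 := by
  ext f
  simp [ATlam, vecMul, dotProduct, Finset.sum_apply]

theorem ATlam_dotProduct (lam : DualVar n) (u : TIdx n → ℝ) :
    ATlam n E lam ⬝ᵥ u = ∑ d, ∑ l ∈ E d, lam d l ⬝ᵥ (Amat n d l.1 l.2 *ᵥ u) := by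
  simp only [ATlam_eq_sum_vecMul, sum_dotProduct, dotProduct_mulVec]

theorem ATlam_dotProduct_le {lam : DualVar n} (hlam : InDualBall n E w γ lam) (u : TIdx n → ℝ) :
    ATlam n E lam ⬝ᵥ u ≤ γ * fusionPenalty n E w u := by
  rw [ATlam_dotProduct, fusionPenalty, Finset.mul_sum]
  refine Finset.sum_le_sum fun d _ => ?_
  rw [Finset.mul_sum]
  refine Finset.sum_le_sum fun l hl => ?_
  calc lam d l ⬝ᵥ (Amat n d l.1 l.2 *ᵥ u)
      ≤ l2 (lam d l) * l2 (Amat n d l.1 l.2 *ᵥ u) := dotProduct_le_l2_mul_l2 _ _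
    _ ≤ γ * w d l * l2 (Amat n d l.1 l.2 *ᵥ u) :=
        mul_le_mul_of_nonneg_right (hlam d l hl) (Real.sqrt_nonneg _)
    _ = γ * (w d l * l2 (Amat n d l.1 l.2 *ᵥ u)) := mul_assoc _ _ _

theorem mem_edgeDualBall {lam : DualVar n} :
    lam ∈ edgeDualBall n E w γ ↔ ∀ d l, l2 (lam d l) ≤ if l ∈ E d then γ * w d l else 0 := by
  simp [edgeDualBall]

theorem edgeDualBall_subset : edgeDualBall n E w γ ⊆ {lam | InDualBall n E w γ lam} :=
  fun _ hlam d l hl => by simpa [hl] using mem_edgeDualBall.1 hlam d l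

theorem zero_mem_edgeDualBall (hγw : ∀ d, ∀ l ∈ E d, 0 ≤ γ * w d l) :
    0 ∈ edgeDualBall n E w γ := by
  refine mem_edgeDualBall.2 fun d l => ?_
  split_ifs with hl
  · simpa [l2] using hγw d l hl
  · simp [l2]

theorem exists_mem_edgeDualBall_ATlam_dotProduct_eq (hγw : ∀ d, ∀ l ∈ E d, 0 ≤ γ * w d l)
    (u : TIdx n → ℝ) :
    ∃ lam ∈ edgeDualBall n E w γ, ATlam n E lam ⬝ᵥ u = γ * fusionPenalty n E w u := by
  have hr : ∀ d l, 0 ≤ if l ∈ E d then γ * w d l else 0 := fun d l => by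
    simpa [l2] using mem_edgeDualBall.1 (zero_mem_edgeDualBall hγw) d l
  choose lam hlam hlamu using fun d l => exists_l2_le_dotProduct_eq (hr d l) (Amat n d l.1 l.2 *ᵥ u)
  refine ⟨lam, mem_edgeDualBall.2 hlam, ?_⟩
  rw [ATlam_dotProduct, fusionPenalty, Finset.mul_sum]
  refine Finset.sum_congr rfl fun d _ => ?_
  rw [Finset.mul_sum]
  refine Finset.sum_congr rfl fun l hl => ?_
  rw [hlamu, if_pos hl, mul_assoc]

theorem cocoE_eq_norm (x u : TIdx n → ℝ) :
    cocoE n E w x γ u =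
      1 / 2 * ‖WithLp.toLp 2 x - WithLp.toLp 2 u‖ ^ 2 + γ * fusionPenalty n E w u := by
  simp [cocoE, fusionPenalty, EuclideanSpace.real_norm_sq_eq]

theorem dualObj_eq_norm (x : TIdx n → ℝ) (lam : DualVar n) :
    dualObj n E x lam = 1 / 2 * ‖WithLp.toLp 2 x‖ ^ 2 -
      1 / 2 * ‖WithLp.toLp 2 x - WithLp.toLp 2 (ATlam n E lam)‖ ^ 2 := by
  simp [dualObj, EuclideanSpace.real_norm_sq_eq]

theorem dualObj_le_cocoE {lam : DualVar n} (hlam : InDualBall n E w γ lam) (x u : TIdx n → ℝ) :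
    dualObj n E x lam ≤ cocoE n E w x γ u := by
  rw [dualObj_eq_norm, cocoE_eq_norm]
  refine weak_duality_of_inner_le ?_
  rw [EuclideanSpace.inner_toLp_toLp, star_trivial]
  exact ATlam_dotProduct_le hlam u

theorem exists_inDualBall_cocoE_eq_dualObj (hγw : ∀ d, ∀ l ∈ E d, 0 ≤ γ * w d l)
    (x : TIdx n → ℝ) :
    ∃ lam, InDualBall n E w γ lam ∧ cocoE n E w x γ (x - ATlam n E lam) = dualObj n E x lam := by
  set K := ATlamLinearMap n E '' edgeDualBall n E w γ
  have hK : IsCompact K :=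
    (isCompact_edgeDualBall n E w γ).image (ATlamLinearMap n E).continuous_of_finiteDimensional
  have hinner : ∀ y lam, ⟪y, ATlamLinearMap n E lam⟫ = ATlam n E lam ⬝ᵥ WithLp.ofLp y :=
    fun y lam => by rw [EuclideanSpace.inner_eq_star_dotProduct, star_trivial]; rfl
  have hsupport_le : ∀ y, ∀ v ∈ K, ⟪y, v⟫ ≤ γ * fusionPenalty n E w y.ofLp := by
    rintro y _ ⟨lam, hlam, rfl⟩
    rw [hinner]
    exact ATlam_dotProduct_le (edgeDualBall_subset hlam) _
  have hsupport_eq : ∀ y, ∃ v ∈ K, ⟪y, v⟫ = γ * fusionPenalty n E w y.ofLp := fun y => by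
    obtain ⟨lam, hlam, h⟩ := exists_mem_edgeDualBall_ATlam_dotProduct_eq hγw y.ofLp
    exact ⟨_, Set.mem_image_of_mem _ hlam, by rw [hinner, h]⟩
  obtain ⟨_, ⟨lam, hlam, rfl⟩, hgap⟩ := exists_zero_duality_gap hK.isComplete
    ((convex_edgeDualBall n E w γ).linear_image _)
    ⟨_, Set.mem_image_of_mem _ (zero_mem_edgeDualBall hγw)⟩ hsupport_le hsupport_eq
    (WithLp.toLp 2 x)
  refine ⟨lam, edgeDualBall_subset hlam, ?_⟩
  rw [cocoE_eq_norm, dualObj_eq_norm]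
  exact hgap

end CoCo

theorem coco_strong_duality_general
    {D : ℕ} (n : Fin D → ℕ) (E : ∀ d, Finset (Fin (n d) × Fin (n d)))
    (w : ∀ d, Fin (n d) × Fin (n d) → ℝ) (hw : ∀ d, ∀ l ∈ E d, 0 < w d l)
    (x : TIdx n → ℝ) (γ : ℝ) (hγ : 0 ≤ γ) :
    ∃ (uhat : TIdx n → ℝ) (lamhat : DualVar n),
      (∀ u : TIdx n → ℝ, cocoE n E w x γ uhat ≤ cocoE n E w x γ u) ∧
      InDualBall n E w γ lamhat ∧
      (∀ lam : DualVar n, InDualBall n E w γ lam → dualObj n E x lam ≤ dualObj n E x lamhat) ∧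
      cocoE n E w x γ uhat = dualObj n E x lamhat := by
  obtain ⟨lamhat, hball, hgap⟩ :=
    exists_inDualBall_cocoE_eq_dualObj (fun d l hl => mul_nonneg hγ (hw d l hl).le) x
  refine ⟨x - ATlam n E lamhat, lamhat, fun u => ?_, hball, fun lam hlam => ?_, hgap⟩
  · rw [hgap]
    exact dualObj_le_cocoE hball x u
  · rw [← hgap]
    exact dualObj_le_cocoE hlam x _

/-- **strong duality for the CoCo problem.**
`min_u F_γ(u) = max_{λ ∈ C} { (1/2)‖x‖₂² − (1/2)‖x − Aᵀλ‖₂² }`, and both the minimum and the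
maximum are attained. -/
theorem coco_strong_duality
    {D : ℕ} (n : Fin D → ℕ) (E : ∀ d, Finset (Fin (n d) × Fin (n d)))
    (hE : ∀ d, ∀ l ∈ E d, l.1 < l.2)
    (w : ∀ d, Fin (n d) × Fin (n d) → ℝ) (hw : ∀ d, ∀ l ∈ E d, 0 < w d l)
    (x : TIdx n → ℝ) (γ : ℝ) (hγ : 0 ≤ γ) :
    ∃ (uhat : TIdx n → ℝ) (lamhat : DualVar n),
      (∀ u : TIdx n → ℝ, cocoE n E w x γ uhat ≤ cocoE n E w x γ u) ∧
      InDualBall n E w γ lamhat ∧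
      (∀ lam : DualVar n, InDualBall n E w γ lam → dualObj n E x lam ≤ dualObj n E x lamhat) ∧
      cocoE n E w x γ uhat = dualObj n E x lamhat :=
  coco_strong_duality_general n E w hw x γ hγ
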